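/- (Corollary 2, equality in the lower bound.) Suppose the rewards are induced by state-dependent rewards: ρ_T(b) = Σ_s b(s) · R_T(s) and ρ_t(b, a) = Σ_s b(s) · R_t(s, a) for functions R_T : S → ℝ and R_t : S × A → ℝ. Then for every t ∈ {0, …, T−1}, every node q ∈ Q_t, every finite index set J, every probability weight vector (g_j)_{j∈J} (g_j ≥ 0, Σ_j g_j = 1), and every family of beliefs (b_j)_{j∈J} in Δ(S), the Jensen inequality holds with equality: Σ_{j∈J} g_j · V_t(b_j, q) = V_t( Σ_{j∈J} g_j · b_j, q ). -/
import Mathlib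


/-- The standard probability simplex Δ(S) of beliefs over a finite state set `S`. -/
def simplex (S : Type*) [Fintype S] : Set (S → ℝ) :=
  {b | (∀ s, 0 ≤ b s) ∧ ∑ s, b s = 1}

/-- Observation likelihood `η(b, z)` for transition kernel `Ps` and observation kernel `Pz`. -/
noncomputable def eta {S Z : Type*} [Fintype S] (Ps : S → S → ℝ) (Pz : S → Z → ℝ)
    (b : S → ℝ) (z : Z) : ℝ :=
  ∑ s', Pz s' z * ∑ s, Ps s s' * b s

/-- Bayes posterior `ζ(b, z)` for transition kernel `Ps` and observation kernel `Pz`. -/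
noncomputable def zeta {S Z : Type*} [Fintype S] (Ps : S → S → ℝ) (Pz : S → Z → ℝ)
    (b : S → ℝ) (z : Z) : S → ℝ :=
  fun s' => Pz s' z * (∑ s, Ps s s' * b s) / eta Ps Pz b z

section aux
variable {S Z : Type*} [Fintype S] [Fintype Z]
variable {Ps : S → S → ℝ} {Pz : S → Z → ℝ}

lemma eta_pos (hPs0 : ∀ s s', 0 ≤ Ps s s') (hPs1 : ∀ s, ∑ s', Ps s s' = 1)
    (hPz0 : ∀ s' z, 0 < Pz s' z)
    {b : S → ℝ} (hb : b ∈ simplex S) (z : Z) : 0 < eta Ps Pz b z := by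
  obtain ⟨hb0, hb1⟩ := hb
  have hc0 : ∀ s', 0 ≤ ∑ s, Ps s s' * b s := fun s' =>
    Finset.sum_nonneg fun s _ => mul_nonneg (hPs0 s s') (hb0 s)
  have hcsum : ∑ s', ∑ s, Ps s s' * b s = 1 := by
    rw [Finset.sum_comm]
    simp_rw [← Finset.sum_mul, hPs1, one_mul]
    exact hb1
  have hex : ∃ s', (0:ℝ) < ∑ s, Ps s s' * b s := by
    by_contra h
    push_neg at h
    have : ∑ s', ∑ s, Ps s s' * b s ≤ 0 :=
      Finset.sum_nonpos fun s' _ => h s'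
    linarith [hcsum ▸ this]
  obtain ⟨s', hs'⟩ := hex
  exact Finset.sum_pos' (fun x _ => mul_nonneg (hPz0 x z).le (hc0 x))
    ⟨s', Finset.mem_univ _, mul_pos (hPz0 s' z) hs'⟩

lemma zeta_mem (hPs0 : ∀ s s', 0 ≤ Ps s s') (hPs1 : ∀ s, ∑ s', Ps s s' = 1)
    (hPz0 : ∀ s' z, 0 < Pz s' z)
    {b : S → ℝ} (hb : b ∈ simplex S) (z : Z) : zeta Ps Pz b z ∈ simplex S := by
  have hη := eta_pos hPs0 hPs1 hPz0 hb z
  constructor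
  · intro s'
    exact div_nonneg (mul_nonneg (hPz0 s' z).le
      (Finset.sum_nonneg fun s _ => mul_nonneg (hPs0 s s') (hb.1 s))) hη.le
  · unfold zeta
    rw [← Finset.sum_div]
    exact div_self hη.ne'

lemma eta_zeta_sum (hPs0 : ∀ s s', 0 ≤ Ps s s') (hPs1 : ∀ s, ∑ s', Ps s s' = 1)
    (hPz0 : ∀ s' z, 0 < Pz s' z)
    {b : S → ℝ} (hb : b ∈ simplex S) (α : Z → S → ℝ) :
    ∑ z, eta Ps Pz b z * (∑ s', zeta Ps Pz b z s' * α z s') =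
      ∑ s, b s * ∑ z, ∑ s', Ps s s' * Pz s' z * α z s' := by
  have hstep : ∀ z, eta Ps Pz b z * (∑ s', zeta Ps Pz b z s' * α z s') =
      ∑ s', Pz s' z * (∑ s, Ps s s' * b s) * α z s' := by
    intro z
    have hη := (eta_pos hPs0 hPs1 hPz0 hb z).ne'
    unfold zeta
    rw [Finset.mul_sum]
    refine Finset.sum_congr rfl fun s' _ => ?_
    field_simp
  simp_rw [hstep, Finset.mul_sum, Finset.sum_mul]
  rw [show (∑ z, ∑ s', ∑ s, Pz s' z * (Ps s s' * b s) * α z s') =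
      ∑ z, ∑ s, ∑ s', Pz s' z * (Ps s s' * b s) * α z s' from
    Finset.sum_congr rfl fun z _ => Finset.sum_comm, Finset.sum_comm]
  refine Finset.sum_congr rfl fun s _ => Finset.sum_congr rfl fun z _ =>
    Finset.sum_congr rfl fun s' _ => by ring

end aux

lemma value_affine
    {S Z A : Type*} [Fintype S] [Fintype Z] [Fintype A]
    (Ps : A → S → S → ℝ) (Pz : A → S → Z → ℝ)
    (hPs0 : ∀ a s s', 0 ≤ Ps a s s') (hPs1 : ∀ a s, ∑ s', Ps a s s' = 1)
    (hPz0 : ∀ a s' z, 0 < Pz a s' z)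
    (T : ℕ) (hT : 1 ≤ T) (Q : ℕ → Type)
    (γ : ∀ t, Q t → A) (lam : ∀ t, Q t → Z → Q (t + 1))
    (ρ : ℕ → (S → ℝ) → A → ℝ) (ρT : (S → ℝ) → ℝ)
    (RT : S → ℝ) (R : ℕ → S → A → ℝ)
    (hρT : ∀ b ∈ simplex S, ρT b = ∑ s, b s * RT s)
    (hρ : ∀ t < T, ∀ a : A, ∀ b ∈ simplex S, ρ t b a = ∑ s, b s * R t s a)
    (V : ∀ t, (S → ℝ) → Q t → ℝ)
    (hVlast : ∀ (b : S → ℝ) (q : Q (T - 1)),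
      V (T - 1) b q = ρ (T - 1) b (γ (T - 1) q) +
        ∑ z, eta (Ps (γ (T - 1) q)) (Pz (γ (T - 1) q)) b z *
          ρT (zeta (Ps (γ (T - 1) q)) (Pz (γ (T - 1) q)) b z))
    (hVstep : ∀ t, t < T - 1 → ∀ (b : S → ℝ) (q : Q t),
      V t b q = ρ t b (γ t q) +
        ∑ z, eta (Ps (γ t q)) (Pz (γ t q)) b z *
          V (t + 1) (zeta (Ps (γ t q)) (Pz (γ t q)) b z) (lam t q z)) :
    ∀ n t, t < T → T - 1 - t = n → ∀ q : Q t, ∃ α : S → ℝ,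
        ∀ b ∈ simplex S, V t b q = ∑ s, b s * α s := by
  intro n
  induction n with
  | zero =>
    intro t ht htn q
    have hteq : t = T - 1 := by omega
    subst hteq
    refine ⟨fun s => R (T-1) s (γ (T-1) q) +
      ∑ z, ∑ s', Ps (γ (T-1) q) s s' * Pz (γ (T-1) q) s' z * RT s', fun b hb => ?_⟩
    rw [hVlast b q, hρ (T-1) (by omega) _ b hb]
    have h1 : ∀ z, ρT (zeta (Ps (γ (T-1) q)) (Pz (γ (T-1) q)) b z) =
        ∑ s', zeta (Ps (γ (T-1) q)) (Pz (γ (T-1) q)) b z s' * RT s' :=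
      fun z => hρT _ (zeta_mem (hPs0 _) (hPs1 _) (hPz0 _) hb z)
    simp_rw [h1]
    rw [eta_zeta_sum (hPs0 _) (hPs1 _) (hPz0 _) hb (fun _ => RT)]
    simp_rw [mul_add]
    rw [Finset.sum_add_distrib]
  | succ n ih =>
    intro t ht htn q
    have ht' : t < T - 1 := by omega
    have hch : ∀ z : Z, ∃ α : S → ℝ, ∀ b ∈ simplex S,
        V (t+1) b (lam t q z) = ∑ s, b s * α s :=
      fun z => ih (t+1) (by omega) (by omega) (lam t q z)
    choose αf hαf using hch
    refine ⟨fun s => R t s (γ t q) +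
      ∑ z, ∑ s', Ps (γ t q) s s' * Pz (γ t q) s' z * αf z s', fun b hb => ?_⟩
    rw [hVstep t ht' b q, hρ t (by omega) _ b hb]
    have h1 : ∀ z, V (t+1) (zeta (Ps (γ t q)) (Pz (γ t q)) b z) (lam t q z) =
        ∑ s', zeta (Ps (γ t q)) (Pz (γ t q)) b z s' * αf z s' :=
      fun z => hαf z _ (zeta_mem (hPs0 _) (hPs1 _) (hPz0 _) hb z)
    simp_rw [h1]
    rw [eta_zeta_sum (hPs0 _) (hPs1 _) (hPz0 _) hb αf]
    simp_rw [mul_add]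
    rw [Finset.sum_add_distrib]

/-- **Corollary 2 (equality in the lower bound).** If the rewards are induced by
state-dependent rewards, then the Jensen inequality for the value function holds with
equality: `∑ j, g j * V t (b j) q = V t (∑ j, g j • b j) q`. -/
theorem value_function_jensen_equality_of_state_dependent_rewards
    {S Z A : Type*} [Fintype S] [Fintype Z] [Fintype A]
    [Nonempty S] [Nonempty Z] [Nonempty A]
    (Ps : A → S → S → ℝ) (Pz : A → S → Z → ℝ)
    (hPs0 : ∀ a s s', 0 ≤ Ps a s s') (hPs1 : ∀ a s, ∑ s', Ps a s s' = 1)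
    (hPz0 : ∀ a s' z, 0 < Pz a s' z) (hPz1 : ∀ a s', ∑ z, Pz a s' z = 1)
    (T : ℕ) (hT : 1 ≤ T)
    (Q : ℕ → Type) [∀ t, Nonempty (Q t)]
    (γ : ∀ t, Q t → A) (lam : ∀ t, Q t → Z → Q (t + 1))
    (ρ : ℕ → (S → ℝ) → A → ℝ) (ρT : (S → ℝ) → ℝ)
    (RT : S → ℝ) (R : ℕ → S → A → ℝ)
    (hρT : ∀ b ∈ simplex S, ρT b = ∑ s, b s * RT s)
    (hρ : ∀ t < T, ∀ a : A, ∀ b ∈ simplex S, ρ t b a = ∑ s, b s * R t s a)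
    (V : ∀ t, (S → ℝ) → Q t → ℝ)
    (hVlast : ∀ (b : S → ℝ) (q : Q (T - 1)),
      V (T - 1) b q = ρ (T - 1) b (γ (T - 1) q) +
        ∑ z, eta (Ps (γ (T - 1) q)) (Pz (γ (T - 1) q)) b z *
          ρT (zeta (Ps (γ (T - 1) q)) (Pz (γ (T - 1) q)) b z))
    (hVstep : ∀ t, t < T - 1 → ∀ (b : S → ℝ) (q : Q t),
      V t b q = ρ t b (γ t q) +
        ∑ z, eta (Ps (γ t q)) (Pz (γ t q)) b z *
          V (t + 1) (zeta (Ps (γ t q)) (Pz (γ t q)) b z) (lam t q z))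
    (t : ℕ) (ht : t < T) (q : Q t)
    (J : Type*) [Fintype J] (g : J → ℝ) (bf : J → (S → ℝ))
    (hg0 : ∀ j, 0 ≤ g j) (hg1 : ∑ j, g j = 1)
    (hbf : ∀ j, bf j ∈ simplex S) :
    ∑ j, g j * V t (bf j) q = V t (∑ j, g j • bf j) q := by
  obtain ⟨α, hα⟩ := value_affine Ps Pz hPs0 hPs1 hPz0 T hT Q γ lam ρ ρT RT R hρT hρ V
    hVlast hVstep (T - 1 - t) t ht rfl q
  have hbar : (∑ j, g j • bf j) ∈ simplex S := by
    constructor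
    · intro s
      rw [Finset.sum_apply]
      exact Finset.sum_nonneg fun j _ => by
        simpa using mul_nonneg (hg0 j) ((hbf j).1 s)
    · simp_rw [Finset.sum_apply, Pi.smul_apply, smul_eq_mul]
      rw [Finset.sum_comm]
      refine (Finset.sum_congr rfl fun j _ => ?_).trans hg1
      rw [← Finset.mul_sum, (hbf j).2, mul_one]
  rw [hα _ hbar]
  calc ∑ j, g j * V t (bf j) q = ∑ j, g j * ∑ s, bf j s * α s :=
        Finset.sum_congr rfl fun j _ => by rw [hα (bf j) (hbf j)]
    _ = ∑ s, (∑ j, g j • bf j) s * α s := by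
        simp_rw [Finset.sum_apply, Pi.smul_apply, smul_eq_mul, Finset.sum_mul, Finset.mul_sum]
        rw [Finset.sum_comm]
        exact Finset.sum_congr rfl fun j _ => Finset.sum_congr rfl fun s _ => by ring
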